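/- arXiv:1110.0025 — 2 statements merged into one kernel-verified Lean document; each statement's English description precedes it below -/
import Mathlib

section
/- Every truthful VCG-based mechanism (k, p) for the combinatorial auction problem whose allocation algorithm is not optimal (i.e., there exists v ∈ V with g(v, k(v)) < g_opt(v)) is not reasonable: there exist a valuation profile v, an item j, and an agent i such that v^i(s ∪ {j}) > v^i(s) for every set s with j ∉ s, and v^l(s ∪ {j}) = v^l(s) for every agent l ≠ i and every set s, yet j ∉ k(v)^i. -/
/-!
Take a profile `v` at which `k` is beaten by an allocation `x`, and replace every agent's
valuation by `s ↦ vᵢ(s ∩ xᵢ) + ε·|s ∩ xᵢ|`. In the new profile each item of `xᵢ` is wanted by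
agent `i` alone, so a reasonable `k` must give every agent a superset of its `xᵢ`, and its
welfare is at least that of `x` at `v`. On the other hand, truthfulness of a VCG-based
mechanism says that an agent's declaration never lowers the declared welfare of `k` compared
to any unilateral deviation; changing the agents one at a time, the welfare of `k` can grow by
at most `ε·Σᵢ |xᵢ|`, which is below the gap at `v` for small `ε`.
-/

/-- A combinatorial-auction valuation: a real-valued function on bundles of items that
is zero on the empty bundle and monotone (hence nonnegative). -/
structure CAValuation (S : Type*) where
  val : Finset S → ℝ
  val_empty : val ∅ = 0
  mono : ∀ s t : Finset S, s ⊆ t → val s ≤ val t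

/-- An allocation: an `n`-tuple of pairwise disjoint bundles of items. -/
abbrev CAAllocation (S : Type*) (n : ℕ) : Type _ :=
  {f : Fin n → Finset S // ∀ i j : Fin n, i ≠ j → Disjoint (f i) (f j)}

/-- The total welfare of allocation `x` at valuation profile `v`. -/
def welfare {S : Type*} {n : ℕ} (v : Fin n → CAValuation S) (x : CAAllocation S n) : ℝ :=
  ∑ i, (v i).val (x.1 i)

section

open Finset

variable {S : Type*} {n : ℕ}

def IsLocallyOptimal (k : (Fin n → CAValuation S) → CAAllocation S n) : Prop :=
  ∀ (w : Fin n → CAValuation S) (i : Fin n) (u : CAValuation S),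
    welfare w (k (Function.update w i u)) ≤ welfare w (k w)

def IsReasonable [DecidableEq S] (k : (Fin n → CAValuation S) → CAAllocation S n) : Prop :=
  ∀ (v : Fin n → CAValuation S) (j : S) (i : Fin n),
    (∀ s : Finset S, j ∉ s → (v i).val (insert j s) > (v i).val s) →
    (∀ l : Fin n, l ≠ i → ∀ s : Finset S, (v l).val (insert j s) = (v l).val s) →
    j ∈ (k v).1 i

lemma welfare_eq_add_sum_erase (w : Fin n → CAValuation S) (y : CAAllocation S n)
    (i : Fin n) :
    welfare w y = (w i).val (y.1 i) + ∑ j ∈ univ.erase i, (w j).val (y.1 j) :=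
  (add_sum_erase _ _ (mem_univ i)).symm

lemma welfare_update (w : Fin n → CAValuation S) (i : Fin n) (u : CAValuation S)
    (y : CAAllocation S n) :
    welfare (Function.update w i u) y = welfare w y - (w i).val (y.1 i) + u.val (y.1 i) := by
  rw [welfare_eq_add_sum_erase _ y i, welfare_eq_add_sum_erase w y i, Function.update_self,
    sum_congr rfl fun j hj => by rw [Function.update_of_ne (ne_of_mem_erase hj)]]
  ring

lemma isLocallyOptimal_of_truthful_vcg {k : (Fin n → CAValuation S) → CAAllocation S n}
    {p h : Fin n → (Fin n → CAValuation S) → ℝ}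
    (hInd : ∀ (i : Fin n) (w w' : Fin n → CAValuation S),
      (∀ j, j ≠ i → w j = w' j) → h i w = h i w')
    (hp : ∀ (i : Fin n) (w : Fin n → CAValuation S),
      p i w = (∑ j ∈ univ.erase i, (w j).val ((k w).1 j)) + h i w)
    (htruth : ∀ (i : Fin n) (v : CAValuation S) (w : Fin n → CAValuation S),
      v.val ((k (Function.update w i v)).1 i) + p i (Function.update w i v) ≥
        v.val ((k w).1 i) + p i w) :
    IsLocallyOptimal k := by
  intro w i u
  set w' := Function.update w i u
  have hothers : ∑ j ∈ univ.erase i, (w' j).val ((k w').1 j)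
      = ∑ j ∈ univ.erase i, (w j).val ((k w').1 j) :=
    sum_congr rfl fun j hj => by
      rw [show w' j = w j from Function.update_of_ne (ne_of_mem_erase hj) u w]
  have htruth_i := htruth i (w i) w'
  rw [Function.update_idem, Function.update_eq_self, hp i w, hp i w', hothers,
    hInd i w w' fun j hj => (Function.update_of_ne hj _ _).symm] at htruth_i
  rw [welfare_eq_add_sum_erase w (k w) i, welfare_eq_add_sum_erase w (k w') i]
  linarith

lemma welfare_update_le {k : (Fin n → CAValuation S) → CAAllocation S n}
    (hk : IsLocallyOptimal k) {w : Fin n → CAValuation S} {i : Fin n} {u : CAValuation S}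
    {c : ℝ} (hu : ∀ s, u.val s ≤ (w i).val s + c) :
    welfare (Function.update w i u) (k (Function.update w i u)) ≤ welfare w (k w) + c := by
  rw [welfare_update]
  linarith [hk w i u, hu ((k (Function.update w i u)).1 i)]

lemma welfare_piecewise_le {k : (Fin n → CAValuation S) → CAAllocation S n}
    (hk : IsLocallyOptimal k) {v v' : Fin n → CAValuation S} {c : Fin n → ℝ}
    (hv' : ∀ i s, (v' i).val s ≤ (v i).val s + c i) (T : Finset (Fin n)) :
    welfare (T.piecewise v' v) (k (T.piecewise v' v)) ≤ welfare v (k v) + ∑ i ∈ T, c i := by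
  induction T using Finset.induction_on with
  | empty => simp
  | insert a T ha ih =>
    rw [piecewise_insert, sum_insert ha]
    have hstep := welfare_update_le hk (w := T.piecewise v' v) (i := a)
      fun s => piecewise_eq_of_notMem T v' v ha ▸ hv' a s
    linarith

lemma welfare_le_add_sum {k : (Fin n → CAValuation S) → CAAllocation S n}
    (hk : IsLocallyOptimal k) {v v' : Fin n → CAValuation S} {c : Fin n → ℝ}
    (hv' : ∀ i s, (v' i).val s ≤ (v i).val s + c i) :
    welfare v' (k v') ≤ welfare v (k v) + ∑ i, c i := by
  simpa using welfare_piecewise_le hk hv' univ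

namespace CAValuation

variable [DecidableEq S]

def restrictAddCard (u : CAValuation S) (a : Finset S) (ε : ℝ) (hε : 0 ≤ ε) :
    CAValuation S where
  val s := u.val (s ∩ a) + ε * #(s ∩ a)
  val_empty := by simp [u.val_empty]
  mono s t hst := by
    have hsub : s ∩ a ⊆ t ∩ a := inter_subset_inter_right hst
    have hcard : (#(s ∩ a) : ℝ) ≤ #(t ∩ a) := by exact_mod_cast card_le_card hsub
    linarith [u.mono _ _ hsub, mul_le_mul_of_nonneg_left hcard hε]

variable (u : CAValuation S) {a : Finset S} {ε : ℝ}

lemma restrictAddCard_le (hε : 0 ≤ ε) (s : Finset S) :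
    (u.restrictAddCard a ε hε).val s ≤ u.val s + ε * #a := by
  show u.val (s ∩ a) + ε * #(s ∩ a) ≤ _
  have hcard : (#(s ∩ a) : ℝ) ≤ #a := by exact_mod_cast card_le_card inter_subset_right
  linarith [u.mono _ _ (inter_subset_left : s ∩ a ⊆ s), mul_le_mul_of_nonneg_left hcard hε]

lemma le_restrictAddCard_self (hε : 0 ≤ ε) : u.val a ≤ (u.restrictAddCard a ε hε).val a := by
  show u.val a ≤ u.val (a ∩ a) + ε * #(a ∩ a)
  rw [inter_self]
  linarith [mul_nonneg hε (#a).cast_nonneg (α := ℝ)]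

lemma restrictAddCard_insert_of_notMem (hε : 0 ≤ ε) {j : S} (hj : j ∉ a) (s : Finset S) :
    (u.restrictAddCard a ε hε).val (insert j s) = (u.restrictAddCard a ε hε).val s := by
  show u.val (insert j s ∩ a) + _ = u.val (s ∩ a) + _
  rw [insert_inter_of_notMem hj]

lemma restrictAddCard_lt_insert_of_mem (hε : 0 < ε) {j : S} (hj : j ∈ a) {s : Finset S}
    (hs : j ∉ s) :
    (u.restrictAddCard a ε hε.le).val s < (u.restrictAddCard a ε hε.le).val (insert j s) := by
  show u.val (s ∩ a) + ε * #(s ∩ a) < u.val (insert j s ∩ a) + ε * #(insert j s ∩ a)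
  have hjs : j ∉ s ∩ a := fun hmem => hs (mem_of_mem_inter_left hmem)
  rw [insert_inter_of_mem hj, card_insert_of_notMem hjs, Nat.cast_succ]
  linarith [u.mono _ _ (subset_insert j (s ∩ a))]

end CAValuation

lemma welfare_le_of_isReasonable [DecidableEq S]
    {k : (Fin n → CAValuation S) → CAAllocation S n} (hreas : IsReasonable k)
    (hk : IsLocallyOptimal k) (v : Fin n → CAValuation S) (x : CAAllocation S n) :
    welfare v x ≤ welfare v (k v) := by
  by_contra! hgap
  set m : ℝ := ∑ i, #(x.1 i)
  have hm : 0 ≤ m := by positivity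
  set ε := (welfare v x - welfare v (k v)) / (m + 1)
  have hε : 0 < ε := div_pos (by linarith) (by linarith)
  set v' : Fin n → CAValuation S := fun i => (v i).restrictAddCard (x.1 i) ε hε.le
  have hupper : welfare v' (k v') ≤ welfare v (k v) + ∑ i, ε * #(x.1 i) :=
    welfare_le_add_sum hk fun i => (v i).restrictAddCard_le hε.le
  have hx_sub : ∀ i, x.1 i ⊆ (k v').1 i := fun i j hj =>
    hreas v' j i (fun _ hs => (v i).restrictAddCard_lt_insert_of_mem hε hj hs)
      fun l hl => (v l).restrictAddCard_insert_of_notMem hε.le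
        (disjoint_right.mp (x.2 l i hl) hj)
  have hlower : welfare v x ≤ welfare v' (k v') := sum_le_sum fun i _ =>
    ((v i).le_restrictAddCard_self hε.le).trans ((v' i).mono _ _ (hx_sub i))
  have hεm : ε * m < welfare v x - welfare v (k v) := by
    rw [div_mul_eq_mul_div, div_lt_iff₀ (by linarith)]
    nlinarith
  rw [← mul_sum] at hupper
  linarith

end

theorem stmt_6_general {S : Type*} [DecidableEq S]
    {n : ℕ}
    (k : (Fin n → CAValuation S) → CAAllocation S n)
    (p : Fin n → (Fin n → CAValuation S) → ℝ)
    (h : Fin n → (Fin n → CAValuation S) → ℝ)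
    (hInd : ∀ (i : Fin n) (w w' : Fin n → CAValuation S),
      (∀ j, j ≠ i → w j = w' j) → h i w = h i w')
    (hp : ∀ (i : Fin n) (w : Fin n → CAValuation S),
      p i w = (∑ j ∈ Finset.univ.erase i, (w j).val ((k w).1 j)) + h i w)
    (htruth : ∀ (i : Fin n) (v : CAValuation S) (w : Fin n → CAValuation S),
      v.val ((k (Function.update w i v)).1 i) + p i (Function.update w i v) ≥
        v.val ((k w).1 i) + p i w)
    (hsubopt : ∃ (v : Fin n → CAValuation S) (x : CAAllocation S n),
      welfare v (k v) < welfare v x) :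
    ∃ (v : Fin n → CAValuation S) (j : S) (i : Fin n),
      (∀ s : Finset S, j ∉ s → (v i).val (insert j s) > (v i).val s) ∧
      (∀ l : Fin n, l ≠ i → ∀ s : Finset S, (v l).val (insert j s) = (v l).val s) ∧
      j ∉ (k v).1 i := by
  obtain ⟨v, x, hvx⟩ := hsubopt
  by_contra hcon
  have hreas : IsReasonable k := fun w j i hi hl =>
    by_contra fun hj => hcon ⟨w, j, i, hi, hl, hj⟩
  exact hvx.not_ge <|
    welfare_le_of_isReasonable hreas (isLocallyOptimal_of_truthful_vcg hInd hp htruth) v x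

/-- Theorem 3: every truthful VCG-based mechanism for combinatorial
auctions whose allocation algorithm is not optimal is not reasonable: there are a
profile `v`, an item `j` and an agent `i` such that `i` is the only agent desiring `j`
(adding `j` strictly increases `i`'s value and leaves every other agent's value
unchanged), yet `j` is not allocated to `i`. -/
theorem stmt_6 {S : Type*} [DecidableEq S] [Fintype S] [Nonempty S]
    {n : ℕ} (hn : 0 < n)
    (k : (Fin n → CAValuation S) → CAAllocation S n)
    (p : Fin n → (Fin n → CAValuation S) → ℝ)
    (h : Fin n → (Fin n → CAValuation S) → ℝ)
    (hInd : ∀ (i : Fin n) (w w' : Fin n → CAValuation S),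
      (∀ j, j ≠ i → w j = w' j) → h i w = h i w')
    (hp : ∀ (i : Fin n) (w : Fin n → CAValuation S),
      p i w = (∑ j ∈ Finset.univ.erase i, (w j).val ((k w).1 j)) + h i w)
    (htruth : ∀ (i : Fin n) (v : CAValuation S) (w : Fin n → CAValuation S),
      v.val ((k (Function.update w i v)).1 i) + p i (Function.update w i v) ≥
        v.val ((k w).1 i) + p i w)
    (hsubopt : ∃ (v : Fin n → CAValuation S) (x : CAAllocation S n),
      welfare v (k v) < welfare v x) :
    ∃ (v : Fin n → CAValuation S) (j : S) (i : Fin n),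
      (∀ s : Finset S, j ∉ s → (v i).val (insert j s) > (v i).val s) ∧
      (∀ l : Fin n, l ≠ i → ∀ s : Finset S, (v l).val (insert j s) = (v l).val s) ∧
      j ∉ (k v).1 i :=
  stmt_6_general k p h hInd hp htruth hsubopt
end

section
/- Let (k, p) be a truthful VCG-based mechanism for a CMAP, let v ∈ V satisfy g(v, k(v)) < g_opt(v), let y ∈ O satisfy g(v, y) = g_opt(v), and let z^1 ∈ V^1 satisfy z^1_j ≤ v^1_j for all j and z^1_j = v^1_j whenever y^1_j = 1. Then, writing v_1 = (z^1, v^{-1}) for the profile v with agent 1's type replaced by z^1, one has g(v_1, k(v_1)) < g(v_1, y). -/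
/-!
Because payments are VCG-based, agent 1's utility from a declaration is the total welfare,
measured with agent 1's true type, of the output that declaration produces, plus a term not
depending on agent 1. With true type `v¹`, truthfulness against the misreport `z¹` therefore
gives `g(v, k(v₁)) ≤ g(v, k(v))`, and monotonicity gives `g(v₁, k(v₁)) ≤ g(v, k(v₁))`. Since
`z¹` agrees with `v¹` where `y` selects agent 1, independence gives `g(v₁, y) = g(v, y)`, which
is the optimum at `v` and so strictly exceeds `g(v, k(v))`.
-/

/-- The total welfare of output `x` at type profile `v` in a CMAP, where `u i vᵢ xᵢ` is
agent `i`'s valuation of its part `xᵢ` of the output at type `vᵢ`. -/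
def cmapWelfare {n : ℕ} {m : Fin n → ℕ}
    (u : ∀ i, (Fin (m i) → ℝ) → (Fin (m i) → Bool) → ℝ)
    (v : ∀ i, Fin (m i) → ℝ) (x : ∀ i, Fin (m i) → Bool) : ℝ :=
  ∑ i, u i (v i) (x i)

/-- The profile `v[α]` (relative to output `x`): keep `vᵢⱼ` on coordinates with
`xᵢⱼ = 1` and replace all other coordinates by `α`. -/
def cmapForce {n : ℕ} {m : Fin n → ℕ}
    (v : ∀ i, Fin (m i) → ℝ) (x : ∀ i, Fin (m i) → Bool) (α : ℝ) :
    ∀ i, Fin (m i) → ℝ :=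
  fun i j => if x i j then v i j else α

open Finset Function

section Welfare

variable {n : ℕ} {m : Fin n → ℕ} (u : ∀ i, (Fin (m i) → ℝ) → (Fin (m i) → Bool) → ℝ)

theorem cmapWelfare_eq_add_sum_erase (v : ∀ i, Fin (m i) → ℝ) (x : ∀ i, Fin (m i) → Bool)
    (i : Fin n) :
    cmapWelfare u v x = u i (v i) (x i) + ∑ j ∈ univ.erase i, u j (v j) (x j) :=
  (add_sum_erase _ _ (mem_univ i)).symm

theorem cmapWelfare_mono
    (hmono : ∀ (i : Fin n) (v w : Fin (m i) → ℝ) (x : Fin (m i) → Bool),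
      w ≤ v → u i w x ≤ u i v x)
    {v w : ∀ i, Fin (m i) → ℝ} (x : ∀ i, Fin (m i) → Bool) (hwv : w ≤ v) :
    cmapWelfare u w x ≤ cmapWelfare u v x :=
  sum_le_sum fun i _ => hmono i _ _ _ (hwv i)

theorem cmapWelfare_congr
    (hindep : ∀ (i : Fin n) (v w : Fin (m i) → ℝ) (x : Fin (m i) → Bool),
      (∀ j, x j = true → v j = w j) → u i v x = u i w x)
    {v w : ∀ i, Fin (m i) → ℝ} {x : ∀ i, Fin (m i) → Bool}
    (hvw : ∀ i j, x i j = true → v i j = w i j) :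
    cmapWelfare u v x = cmapWelfare u w x :=
  sum_congr rfl fun i _ => hindep i _ _ _ (hvw i)

theorem cmapWelfare_le_of_truthful_vcg (Vsp : ∀ i, Set (Fin (m i) → ℝ))
    (k : (∀ i, Fin (m i) → ℝ) → (∀ i, Fin (m i) → Bool))
    (p h : Fin n → (∀ i, Fin (m i) → ℝ) → ℝ)
    (hInd : ∀ (i : Fin n) (w w' : ∀ j, Fin (m j) → ℝ),
      (∀ j, j ≠ i → w j = w' j) → h i w = h i w')
    (hp : ∀ (i : Fin n) (w : ∀ j, Fin (m j) → ℝ),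
      p i w = (∑ j ∈ univ.erase i, u j (w j) (k w j)) + h i w)
    (htruth : ∀ (i : Fin n) (vi : Fin (m i) → ℝ), vi ∈ Vsp i →
      ∀ w : ∀ j, Fin (m j) → ℝ, (∀ j, w j ∈ Vsp j) →
        u i vi (k (update w i vi) i) + p i (update w i vi) ≥ u i vi (k w i) + p i w)
    {i : Fin n} {vi : Fin (m i) → ℝ} (hvi : vi ∈ Vsp i)
    {w : ∀ j, Fin (m j) → ℝ} (hw : ∀ j, w j ∈ Vsp j) :
    cmapWelfare u (update w i vi) (k w) ≤ cmapWelfare u (update w i vi) (k (update w i vi)) := by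
  have hh : h i (update w i vi) = h i w := hInd i _ _ fun j hj => update_of_ne hj _ _
  have hothers : ∀ x : ∀ j, Fin (m j) → Bool,
      ∑ j ∈ univ.erase i, u j (update w i vi j) (x j) = ∑ j ∈ univ.erase i, u j (w j) (x j) :=
    fun x => sum_congr rfl fun j hj => by rw [update_of_ne (ne_of_mem_erase hj)]
  have ht := htruth i vi hvi w hw
  rw [hp, hp, hh, hothers] at ht
  rw [cmapWelfare_eq_add_sum_erase u _ _ i, cmapWelfare_eq_add_sum_erase u _ _ i, hothers,
    hothers, update_self]
  linarith

end Welfare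

theorem stmt_10_general {n : ℕ} (hn : 0 < n) (m : Fin n → ℕ)
    (Vsp : ∀ i, Set (Fin (m i) → ℝ))
    (O : Finset (∀ i, Fin (m i) → Bool)) (hO : O.Nonempty)
    (u : ∀ i, (Fin (m i) → ℝ) → (Fin (m i) → Bool) → ℝ)
    (hindep : ∀ (i : Fin n) (v w : Fin (m i) → ℝ) (x : Fin (m i) → Bool),
      (∀ j, x j = true → v j = w j) → u i v x = u i w x)
    (hmono : ∀ (i : Fin n) (v w : Fin (m i) → ℝ) (x : Fin (m i) → Bool),
      w ≤ v → u i w x ≤ u i v x)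
    (k : (∀ i, Fin (m i) → ℝ) → (∀ i, Fin (m i) → Bool))
    (p : Fin n → (∀ i, Fin (m i) → ℝ) → ℝ)
    (h : Fin n → (∀ i, Fin (m i) → ℝ) → ℝ)
    (hInd : ∀ (i : Fin n) (w w' : ∀ j, Fin (m j) → ℝ),
      (∀ j, j ≠ i → w j = w' j) → h i w = h i w')
    (hp : ∀ (i : Fin n) (w : ∀ j, Fin (m j) → ℝ),
      p i w = (∑ j ∈ Finset.univ.erase i, u j (w j) (k w j)) + h i w)
    (htruth : ∀ (i : Fin n) (vi : Fin (m i) → ℝ), vi ∈ Vsp i →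
      ∀ w : ∀ j, Fin (m j) → ℝ, (∀ j, w j ∈ Vsp j) →
        u i vi (k (Function.update w i vi) i) + p i (Function.update w i vi) ≥
          u i vi (k w i) + p i w)
    (v : ∀ i, Fin (m i) → ℝ) (hv : ∀ i, v i ∈ Vsp i)
    (hsub : cmapWelfare u v (k v) < O.sup' hO (fun x => cmapWelfare u v x))
    (y : ∀ i, Fin (m i) → Bool)
    (hyopt : cmapWelfare u v y = O.sup' hO (fun x => cmapWelfare u v x))
    (z1 : Fin (m ⟨0, hn⟩) → ℝ) (hz1 : z1 ∈ Vsp ⟨0, hn⟩)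
    (hz1le : z1 ≤ v ⟨0, hn⟩)
    (hz1eq : ∀ j : Fin (m ⟨0, hn⟩), y ⟨0, hn⟩ j = true → z1 j = v ⟨0, hn⟩ j) :
    cmapWelfare u (Function.update v ⟨0, hn⟩ z1) (k (Function.update v ⟨0, hn⟩ z1)) <
      cmapWelfare u (Function.update v ⟨0, hn⟩ z1) y := by
  set v₁ := update v ⟨0, hn⟩ z1
  have hv₁ : ∀ j, v₁ j ∈ Vsp j := forall_update_iff v (p := fun j t => t ∈ Vsp j) |>.2
    ⟨hz1, fun j _ => hv j⟩
  have hrestore : update v₁ ⟨0, hn⟩ (v ⟨0, hn⟩) = v := by simp [v₁]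
  have htruthful : cmapWelfare u v (k v₁) ≤ cmapWelfare u v (k v) := by
    simpa only [hrestore] using
      cmapWelfare_le_of_truthful_vcg u Vsp k p h hInd hp htruth (hv ⟨0, hn⟩) hv₁
  have hlower : cmapWelfare u v₁ (k v₁) ≤ cmapWelfare u v (k v₁) :=
    cmapWelfare_mono u hmono _ (update_le_iff.2 ⟨hz1le, fun _ _ => le_rfl⟩)
  have hy : cmapWelfare u v₁ y = cmapWelfare u v y := by
    refine cmapWelfare_congr u hindep fun i j hj => ?_
    rcases eq_or_ne i ⟨0, hn⟩ with rfl | hi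
    · simpa [v₁] using hz1eq j hj
    · simp [v₁, hi]
  linarith

/-- let `(k, p)` be a truthful VCG-based mechanism for a CMAP, let `v` be
a profile at which `k` is suboptimal, `y` an optimal output for `v`, and `z¹ ≤ v¹` a
type for agent 1 agreeing with `v¹` on the coordinates selected by `y`. Then at the
profile `v₁ = (z¹, v⁻¹)` the algorithm's output is still strictly worse than `y`. -/
theorem stmt_10 {n : ℕ} (hn : 0 < n) (m : Fin n → ℕ)
    (Vsp : ∀ i, Set (Fin (m i) → ℝ))
    (hdown : ∀ (i : Fin n) (v w : Fin (m i) → ℝ), v ∈ Vsp i → w ≤ v → w ∈ Vsp i)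
    (O : Finset (∀ i, Fin (m i) → Bool)) (hO : O.Nonempty)
    (u : ∀ i, (Fin (m i) → ℝ) → (Fin (m i) → Bool) → ℝ)
    (hindep : ∀ (i : Fin n) (v w : Fin (m i) → ℝ) (x : Fin (m i) → Bool),
      (∀ j, x j = true → v j = w j) → u i v x = u i w x)
    (hmono : ∀ (i : Fin n) (v w : Fin (m i) → ℝ) (x : Fin (m i) → Bool),
      w ≤ v → u i w x ≤ u i v x)
    (k : (∀ i, Fin (m i) → ℝ) → (∀ i, Fin (m i) → Bool))
    (hk : ∀ v : ∀ i, Fin (m i) → ℝ, (∀ i, v i ∈ Vsp i) → k v ∈ O)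
    (p : Fin n → (∀ i, Fin (m i) → ℝ) → ℝ)
    (h : Fin n → (∀ i, Fin (m i) → ℝ) → ℝ)
    (hInd : ∀ (i : Fin n) (w w' : ∀ j, Fin (m j) → ℝ),
      (∀ j, j ≠ i → w j = w' j) → h i w = h i w')
    (hp : ∀ (i : Fin n) (w : ∀ j, Fin (m j) → ℝ),
      p i w = (∑ j ∈ Finset.univ.erase i, u j (w j) (k w j)) + h i w)
    (htruth : ∀ (i : Fin n) (vi : Fin (m i) → ℝ), vi ∈ Vsp i →
      ∀ w : ∀ j, Fin (m j) → ℝ, (∀ j, w j ∈ Vsp j) →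
        u i vi (k (Function.update w i vi) i) + p i (Function.update w i vi) ≥
          u i vi (k w i) + p i w)
    (v : ∀ i, Fin (m i) → ℝ) (hv : ∀ i, v i ∈ Vsp i)
    (hsub : cmapWelfare u v (k v) < O.sup' hO (fun x => cmapWelfare u v x))
    (y : ∀ i, Fin (m i) → Bool) (hy : y ∈ O)
    (hyopt : cmapWelfare u v y = O.sup' hO (fun x => cmapWelfare u v x))
    (z1 : Fin (m ⟨0, hn⟩) → ℝ) (hz1 : z1 ∈ Vsp ⟨0, hn⟩)
    (hz1le : z1 ≤ v ⟨0, hn⟩)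
    (hz1eq : ∀ j : Fin (m ⟨0, hn⟩), y ⟨0, hn⟩ j = true → z1 j = v ⟨0, hn⟩ j) :
    cmapWelfare u (Function.update v ⟨0, hn⟩ z1) (k (Function.update v ⟨0, hn⟩ z1)) <
      cmapWelfare u (Function.update v ⟨0, hn⟩ z1) y :=
  stmt_10_general hn m Vsp O hO u hindep hmono k p h hInd hp htruth v hv hsub y hyopt z1 hz1 hz1le
    hz1eq
end
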